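/- With the decomposition of a closed real subspace L of a complex Hilbert space H as above, the real subspace Ls := La + Lf is a standard subspace of Ls⊕ := La⊕ ⊕ Lf⊕, i.e.: (i) Ls ∩ iLs = {0}; and (ii) Ls + iLs is dense in La⊕ ⊕ Lf⊕. -/

import Mathlib

attribute [local instance] InnerProductSpace.complexToReal

variable {H : Type*} [NormedAddCommGroup H] [InnerProductSpace ℂ H]

/-- Multiplication by `i`, as a real-linear map on a complex Hilbert space. -/
noncomputable def mulI : H →ₗ[ℝ] H where
  toFun x := Complex.I • x
  map_add' x y := by simp [smul_add]
  map_smul' r x := smul_comm Complex.I r x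

/-- The symplectic complement `L' = {g | Im⟪f,g⟫ = 0 ∀ f ∈ L}` of a real subspace `L`,
as a real subspace. -/
noncomputable def sympCompl (L : Submodule ℝ H) : Submodule ℝ H where
  carrier := {g | ∀ f ∈ L, (inner ℂ f g : ℂ).im = 0}
  add_mem' := by
    intro a b ha hb f hf
    rw [inner_add_right]
    simp [ha f hf, hb f hf]
  zero_mem' := by
    intro f hf
    simp
  smul_mem' := by
    intro r g hg f hf
    rw [RCLike.real_smul_eq_coe_smul (K := ℂ), inner_smul_right]
    simp [Complex.mul_im, hg f hf]

/-- The nonseparating part `L∞ = L ∩ iL`. -/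
noncomputable def nonsepPart (L : Submodule ℝ H) : Submodule ℝ H :=
  L ⊓ L.map mulI

/-- The abelian part `La = L ∩ L'`. -/
noncomputable def abelPart (L : Submodule ℝ H) : Submodule ℝ H :=
  L ⊓ sympCompl L

/-- `La⊕ = La + iLa`. -/
noncomputable def abelPartC (L : Submodule ℝ H) : Submodule ℝ H :=
  abelPart L ⊔ (abelPart L).map mulI

/-- `L₀ = (closure of (L + iL))ᗮ`, orthogonal complement w.r.t. the real inner product. -/
noncomputable def zeroPart (L : Submodule ℝ H) : Submodule ℝ H :=
  ((L ⊔ L.map mulI).topologicalClosure)ᗮ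

/-- `Lf⊕ = (L₀ ⊕ La⊕ ⊕ L∞)ᗮ`. -/
noncomputable def factPartC (L : Submodule ℝ H) : Submodule ℝ H :=
  (zeroPart L ⊔ abelPartC L ⊔ nonsepPart L)ᗮ

/-- The factorial part `Lf = Lf⊕ ∩ L`. -/
noncomputable def factPart (L : Submodule ℝ H) : Submodule ℝ H :=
  factPartC L ⊓ L

/-!
Write `K = L₀ ⊕ La⊕ ⊕ L∞`, so that `Lf⊕ = Kᗮ`. Each summand of `K` is stable under
multiplication by `i`, hence so is `Lf⊕`. The condition `La ⊆ L'` says exactly that `i·La ⟂ L`;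
in particular `La ⟂ i·La` and `La ∩ i·La = 0`, while `Lf ∩ i·Lf ⊆ L∞ ∩ Lf⊕ = 0`. As also
`La⊕ ∩ Lf⊕ = 0`, an element of `Ls ∩ i·Ls` splits into pieces in `La ∩ i·La` and `Lf ∩ i·Lf`,
and vanishes.

For density, successive orthogonal projections give `L = La + L∞ + Lf`. A vector of `Lf⊕`
orthogonal to `Lf + i·Lf` is then orthogonal to `L + i·L`, i.e. lies in `L₀ ⊆ K`, so it is zero:
`Lf + i·Lf` is dense in `Lf⊕`. Finally `La⊕` and `Lf⊕` are orthogonal closed subspaces, so their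
sum is closed.
-/

open Submodule Module.End

section OrthogonalSum

variable {𝕜 E : Type*} [RCLike 𝕜] [NormedAddCommGroup E] [InnerProductSpace 𝕜 E] [CompleteSpace E]

theorem Submodule.IsOrtho.isClosed_sup {U V : Submodule 𝕜 E} (hU : IsClosed (U : Set E))
    (hV : IsClosed (V : Set E)) (hUV : U ⟂ V) : IsClosed ((U ⊔ V : Submodule 𝕜 E) : Set E) := by
  have : CompleteSpace U := hU.completeSpace_coe
  have : CompleteSpace V := hV.completeSpace_coe
  set W := (U ⊔ V).topologicalClosure
  have hUW : U ≤ W := le_sup_left.trans (U ⊔ V).le_topologicalClosure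
  have hVW : V ≤ Uᗮ ⊓ W := le_inf hUV.ge (le_sup_right.trans (U ⊔ V).le_topologicalClosure)
  have hrest : Vᗮ ⊓ (Uᗮ ⊓ W) = ⊥ := by
    rw [← inf_assoc, inf_comm Vᗮ, inf_orthogonal, inf_comm, ← orthogonal_closure]
    exact inf_orthogonal_eq_bot _
  have hWle : W ≤ U ⊔ V := by
    rw [← sup_orthogonal_inf_of_hasOrthogonalProjection hUW,
      ← sup_orthogonal_inf_of_hasOrthogonalProjection hVW, hrest, sup_bot_eq]
  have hclosed : W = U ⊔ V := le_antisymm hWle (U ⊔ V).le_topologicalClosure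
  exact hclosed ▸ (U ⊔ V).isClosed_topologicalClosure

theorem Submodule.topologicalClosure_eq_of_inf_orthogonal_eq_bot {V W : Submodule 𝕜 E}
    (hW : IsClosed (W : Set E)) (hVW : V ≤ W) (h : W ⊓ Vᗮ = ⊥) : V.topologicalClosure = W := by
  have : CompleteSpace V.topologicalClosure := V.isClosed_topologicalClosure.completeSpace_coe
  calc V.topologicalClosure = V.topologicalClosure ⊔ V.topologicalClosureᗮ ⊓ W := by
        rw [orthogonal_closure, inf_comm, h, sup_bot_eq]
    _ = W := sup_orthogonal_inf_of_hasOrthogonalProjection (V.topologicalClosure_minimal hVW hW)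

theorem Submodule.topologicalClosure_sup_eq_of_isOrtho {U V W : Submodule 𝕜 E}
    (hU : IsClosed (U : Set E)) (hW : IsClosed (W : Set E)) (hUW : U ⟂ W)
    (hVW : V.topologicalClosure = W) : (U ⊔ V).topologicalClosure = U ⊔ W := by
  refine le_antisymm (topologicalClosure_minimal _ ?_ (hUW.isClosed_sup hU hW)) ?_
  · exact sup_le_sup_left (hVW ▸ V.le_topologicalClosure) U
  · exact sup_le (le_sup_left.trans (U ⊔ V).le_topologicalClosure)
      (hVW ▸ topologicalClosure_mono le_sup_right)

end OrthogonalSum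

lemma mulI_apply (x : H) : mulI x = Complex.I • x := rfl

lemma mulI_mulI (x : H) : mulI (mulI x) = -x := by
  rw [mulI_apply, mulI_apply, smul_smul, Complex.I_mul_I, neg_one_smul]

lemma map_mulI_map_mulI (U : Submodule ℝ H) : (U.map mulI).map mulI = U := by
  have hcomp : mulI ∘ₗ mulI = -(LinearMap.id : H →ₗ[ℝ] H) := LinearMap.ext mulI_mulI
  rw [← Submodule.map_comp, hcomp, Submodule.map_neg, Submodule.map_id]

lemma inner_mulI_right (x y : H) : inner ℝ x (mulI y) = -(inner ℂ x y).im := by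
  simp [real_inner_eq_re_inner ℂ, mulI_apply, inner_smul_right]

lemma inner_mulI_left_eq_neg (x y : H) : inner ℝ (mulI x) y = -inner ℝ x (mulI y) := by
  simp [real_inner_eq_re_inner ℂ, mulI_apply, inner_smul_left, inner_smul_right]

lemma isClosed_map_mulI {U : Submodule ℝ H} (hU : IsClosed (U : Set H)) :
    IsClosed ((U.map mulI : Submodule ℝ H) : Set H) := by
  rw [map_coe]
  exact hU.smul_of_ne_zero Complex.I_ne_zero

lemma sup_map_mulI_mem_invtSubmodule (U : Submodule ℝ H) :
    U ⊔ U.map mulI ∈ invtSubmodule mulI := by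
  rw [mem_invtSubmodule_iff_map_le, Submodule.map_sup, map_mulI_map_mulI, sup_comm]

lemma inf_map_mulI_mem_invtSubmodule (U : Submodule ℝ H) :
    U ⊓ U.map mulI ∈ invtSubmodule mulI := by
  rintro _ ⟨hx, y, hy, rfl⟩
  exact ⟨(mulI_mulI y).symm ▸ U.neg_mem hy, _, hx, rfl⟩

lemma orthogonal_mem_invtSubmodule_mulI {U : Submodule ℝ H} (hU : U ∈ invtSubmodule mulI) :
    Uᗮ ∈ invtSubmodule mulI := by
  intro x hx u hu
  rw [← neg_neg (inner ℝ u (mulI x)), ← inner_mulI_left_eq_neg, hx _ (hU hu), neg_zero]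

lemma topologicalClosure_mem_invtSubmodule_mulI {U : Submodule ℝ H}
    (hU : U ∈ invtSubmodule mulI) : U.topologicalClosure ∈ invtSubmodule mulI :=
  fun _ hx ↦ map_mem_closure (continuous_const_smul Complex.I) hx hU

lemma disjoint_sup_map_mulI {A B : Submodule ℝ H} (hA : Disjoint A (A.map mulI))
    (hB : Disjoint B (B.map mulI)) (hAB : Disjoint (A ⊔ A.map mulI) (B ⊔ B.map mulI)) :
    Disjoint (A ⊔ B) ((A ⊔ B).map mulI) := by
  rw [disjoint_def]
  rintro _ hx ⟨y, hy, rfl⟩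
  obtain ⟨a, ha, b, hb, hab⟩ := mem_sup.1 hx
  obtain ⟨a', ha', b', hb', rfl⟩ := mem_sup.1 hy
  rw [map_add] at hab
  have hsplit : a - mulI a' = mulI b' - b :=
    sub_eq_sub_iff_add_eq_add.2 (hab.trans (add_comm _ _))
  have h0 : a - mulI a' = 0 :=
    disjoint_def.1 hAB _ (sub_mem (mem_sup_left ha) (mem_sup_right ⟨a', ha', rfl⟩))
      (hsplit ▸ sub_mem (mem_sup_right ⟨b', hb', rfl⟩) (mem_sup_left hb))
  have ha0 : a = 0 := disjoint_def.1 hA a ha (sub_eq_zero.1 h0 ▸ ⟨a', ha', rfl⟩)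
  have hb0 : b = 0 := disjoint_def.1 hB b hb ((sub_eq_zero.1 (hsplit ▸ h0)).symm ▸ ⟨b', hb', rfl⟩)
  rw [map_add, ← hab, ha0, hb0, add_zero]

section Decomposition

variable {L : Submodule ℝ H}

lemma mem_sympCompl_iff {g : H} : g ∈ sympCompl L ↔ mulI g ∈ Lᗮ := by
  rw [mem_orthogonal]
  simp only [inner_mulI_right, neg_eq_zero]
  rfl

variable (L)

lemma isClosed_sympCompl : IsClosed (sympCompl L : Set H) := by
  have hcomap : sympCompl L = Lᗮ.comap mulI := Submodule.ext fun _ ↦ mem_sympCompl_iff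
  rw [hcomap, comap_coe]
  exact (isClosed_orthogonal L).preimage (continuous_const_smul Complex.I)

lemma map_mulI_abelPart_isOrtho : (abelPart L).map mulI ⟂ L :=
  isOrtho_iff_le.2 <| by
    rintro _ ⟨a, ha, rfl⟩
    exact mem_sympCompl_iff.1 ha.2

lemma abelPart_isOrtho_map_mulI : abelPart L ⟂ L.map mulI := by
  rw [isOrtho_iff_inner_eq]
  rintro a ha _ ⟨y, hy, rfl⟩
  rw [← neg_neg (inner ℝ a (mulI y)), ← inner_mulI_left_eq_neg,
    (map_mulI_abelPart_isOrtho L).inner_eq ⟨a, ha, rfl⟩ hy, neg_zero]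

lemma abelPart_isOrtho_map_mulI_abelPart : abelPart L ⟂ (abelPart L).map mulI :=
  (map_mulI_abelPart_isOrtho L).symm.mono_left inf_le_left

lemma abelPart_isOrtho_nonsepPart : abelPart L ⟂ nonsepPart L :=
  (abelPart_isOrtho_map_mulI L).mono_right inf_le_right

lemma abelPartC_isOrtho_factPartC : abelPartC L ⟂ factPartC L :=
  (isOrtho_orthogonal_right _).mono_left (le_sup_right.trans le_sup_left)

lemma nonsepPart_isOrtho_factPartC : nonsepPart L ⟂ factPartC L :=
  (isOrtho_orthogonal_right _).mono_left le_sup_right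

lemma disjoint_factPart_map_mulI : Disjoint (factPart L) ((factPart L).map mulI) := by
  rw [disjoint_def]
  intro x hx hix
  exact disjoint_def.1 (nonsepPart_isOrtho_factPartC L).disjoint x
    ⟨hx.2, Submodule.map_mono inf_le_right hix⟩ hx.1

lemma zeroPart_sup_abelPartC_sup_nonsepPart_mem_invtSubmodule :
    zeroPart L ⊔ abelPartC L ⊔ nonsepPart L ∈ invtSubmodule mulI :=
  Sublattice.sup_mem (Sublattice.sup_mem
    (orthogonal_mem_invtSubmodule_mulI (topologicalClosure_mem_invtSubmodule_mulI
      (sup_map_mulI_mem_invtSubmodule L)))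
    (sup_map_mulI_mem_invtSubmodule _)) (inf_map_mulI_mem_invtSubmodule L)

lemma factPart_sup_map_mulI_le_factPartC : factPart L ⊔ (factPart L).map mulI ≤ factPartC L :=
  sup_le inf_le_left <| (Submodule.map_mono inf_le_left).trans <|
    (mem_invtSubmodule_iff_map_le _).1 <| orthogonal_mem_invtSubmodule_mulI
      (zeroPart_sup_abelPartC_sup_nonsepPart_mem_invtSubmodule L)

lemma orthogonal_inf_le_factPart : (nonsepPart L)ᗮ ⊓ ((abelPart L)ᗮ ⊓ L) ≤ factPart L := by
  refine le_inf (IsOrtho.ge ?_) (inf_le_right.trans inf_le_right)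
  rw [isOrtho_sup_left, isOrtho_sup_left, abelPartC, isOrtho_sup_left]
  refine ⟨⟨?_, ?_, ?_⟩, ?_⟩
  · exact (isOrtho_orthogonal_left _).mono_right <| (inf_le_right.trans inf_le_right).trans <|
      le_sup_left.trans (L ⊔ L.map mulI).le_topologicalClosure
  · exact (isOrtho_orthogonal_right _).mono_right (inf_le_right.trans inf_le_left)
  · exact (map_mulI_abelPart_isOrtho L).mono_right (inf_le_right.trans inf_le_right)
  · exact (isOrtho_orthogonal_right _).mono_right inf_le_left

variable {L}

lemma isClosed_abelPart (hL : IsClosed (L : Set H)) : IsClosed (abelPart L : Set H) :=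
  hL.inter (isClosed_sympCompl L)

lemma isClosed_nonsepPart (hL : IsClosed (L : Set H)) : IsClosed (nonsepPart L : Set H) :=
  hL.inter (isClosed_map_mulI hL)

variable [CompleteSpace H]

lemma isClosed_abelPartC (hL : IsClosed (L : Set H)) : IsClosed (abelPartC L : Set H) :=
  (abelPart_isOrtho_map_mulI_abelPart L).isClosed_sup (isClosed_abelPart hL)
    (isClosed_map_mulI (isClosed_abelPart hL))

lemma le_abelPart_sup_nonsepPart_sup_factPart (hL : IsClosed (L : Set H)) :
    L ≤ abelPart L ⊔ nonsepPart L ⊔ factPart L := by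
  have : CompleteSpace (abelPart L) := (isClosed_abelPart hL).completeSpace_coe
  have : CompleteSpace (nonsepPart L) := (isClosed_nonsepPart hL).completeSpace_coe
  have hN : nonsepPart L ≤ (abelPart L)ᗮ ⊓ L :=
    le_inf (abelPart_isOrtho_nonsepPart L).ge inf_le_left
  calc L = abelPart L ⊔ (abelPart L)ᗮ ⊓ L :=
        (sup_orthogonal_inf_of_hasOrthogonalProjection (K₁ := abelPart L) inf_le_left).symm
    _ = abelPart L ⊔ (nonsepPart L ⊔ (nonsepPart L)ᗮ ⊓ ((abelPart L)ᗮ ⊓ L)) := by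
        rw [sup_orthogonal_inf_of_hasOrthogonalProjection hN]
    _ ≤ abelPart L ⊔ (nonsepPart L ⊔ factPart L) :=
        sup_le_sup_left (sup_le_sup_left (orthogonal_inf_le_factPart L) _) _
    _ = abelPart L ⊔ nonsepPart L ⊔ factPart L := (sup_assoc _ _ _).symm

lemma factPartC_inf_orthogonal_eq_bot (hL : IsClosed (L : Set H)) :
    factPartC L ⊓ (factPart L ⊔ (factPart L).map mulI)ᗮ = ⊥ := by
  set K := zeroPart L ⊔ abelPartC L ⊔ nonsepPart L
  set X := factPart L ⊔ (factPart L).map mulI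
  have hLK : L ≤ K ⊔ factPart L :=
    (le_abelPart_sup_nonsepPart_sup_factPart hL).trans <| sup_le_sup_right
      (sup_le (le_sup_left.trans (le_sup_right.trans le_sup_left)) le_sup_right) _
  have hiLK : L.map mulI ≤ K ⊔ (factPart L).map mulI := by
    refine (Submodule.map_mono hLK).trans ?_
    rw [Submodule.map_sup]
    exact sup_le_sup_right ((mem_invtSubmodule_iff_map_le _).1
      (zeroPart_sup_abelPartC_sup_nonsepPart_mem_invtSubmodule L)) _
  have hK : factPartC L ⊓ Xᗮ ≤ K :=
    calc Kᗮ ⊓ Xᗮ = (K ⊔ X)ᗮ := inf_orthogonal _ _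
      _ ≤ (L ⊔ L.map mulI)ᗮ := orthogonal_le <| sup_le
          (hLK.trans (sup_le_sup_left le_sup_left _)) (hiLK.trans (sup_le_sup_left le_sup_right _))
      _ = zeroPart L := (orthogonal_closure _).symm
      _ ≤ K := le_sup_left.trans le_sup_left
  exact eq_bot_iff.2 ((le_inf hK inf_le_left).trans (inf_orthogonal_eq_bot K).le)

lemma topologicalClosure_factPart_sup_map_mulI (hL : IsClosed (L : Set H)) :
    (factPart L ⊔ (factPart L).map mulI).topologicalClosure = factPartC L :=
  topologicalClosure_eq_of_inf_orthogonal_eq_bot (isClosed_orthogonal _)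
    (factPart_sup_map_mulI_le_factPartC L) (factPartC_inf_orthogonal_eq_bot hL)

end Decomposition

/-- With the decomposition of a closed real subspace `L` of a complex Hilbert space `H` as
above, `Ls := La + Lf` is a standard subspace of `Ls⊕ := La⊕ ⊕ Lf⊕`:
(i) `Ls ∩ iLs = {0}`; (ii) `Ls + iLs` is dense in `La⊕ ⊕ Lf⊕`. -/
theorem standard_part_is_standard [CompleteSpace H]
    (L : Submodule ℝ H) (hL : IsClosed (L : Set H)) :
    ((abelPart L ⊔ factPart L) ⊓ (abelPart L ⊔ factPart L).map mulI = ⊥) ∧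
    (((abelPart L ⊔ factPart L) ⊔ (abelPart L ⊔ factPart L).map mulI).topologicalClosure
      = abelPartC L ⊔ factPartC L) := by
  refine ⟨disjoint_iff.1 ?_, ?_⟩
  · exact disjoint_sup_map_mulI (abelPart_isOrtho_map_mulI_abelPart L).disjoint
      (disjoint_factPart_map_mulI L)
      ((abelPartC_isOrtho_factPartC L).disjoint.mono_right (factPart_sup_map_mulI_le_factPartC L))
  · rw [Submodule.map_sup, sup_sup_sup_comm]
    exact topologicalClosure_sup_eq_of_isOrtho (isClosed_abelPartC hL) (isClosed_orthogonal _)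
      (abelPartC_isOrtho_factPartC L) (topologicalClosure_factPart_sup_map_mulI hL)
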